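/- Every legal move in a residual graph decreases the total weight by at least 3. -/

import Mathlib

open SimpleGraph Finset

inductive GameColor | white | green | blue | red
deriving DecidableEq

def GameColor.weight : GameColor → ℕ
  | white => 3
  | green => 2
  | blue => 1
  | red => 0

variable {V : Type} [Fintype V] [DecidableEq V]

/-- The set of vertices totally dominated by the played set `D`. -/
def totDom (G : SimpleGraph V) [DecidableRel G.Adj] (D : Finset V) : Finset V :=
  Finset.univ.filter fun u => ∃ v ∈ D, G.Adj u v

/-- A vertex `v` is a legal move if playing it totally dominates a new vertex. -/
def isLegal (G : SimpleGraph V) [DecidableRel G.Adj] (D : Finset V) (v : V) : Prop :=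
  ∃ u, G.Adj v u ∧ u ∉ totDom G D

instance (G : SimpleGraph V) [DecidableRel G.Adj] (D : Finset V) :
    DecidablePred (isLegal G D) := fun v =>
  decidable_of_iff (∃ u, G.Adj v u ∧ u ∉ totDom G D) Iff.rfl

/-- The color of a vertex in the partially total dominated graph with played set `D`. -/
def colorOf (G : SimpleGraph V) [DecidableRel G.Adj] (D : Finset V) (v : V) : GameColor :=
  if v ∈ totDom G D then
    (if isLegal G D v then .blue else .red)
  else (if v ∈ D then .green else .white)

/-- The total weight of the colored graph. -/
def totalWeight (G : SimpleGraph V) [DecidableRel G.Adj] (D : Finset V) : ℕ :=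
  ∑ v, (colorOf G D v).weight

/-- The residualGraph graph: delete red vertices and blue–blue edges. -/
def residualGraph (G : SimpleGraph V) [DecidableRel G.Adj] (D : Finset V) : SimpleGraph V where
  Adj u w := G.Adj u w ∧ colorOf G D u ≠ .red ∧ colorOf G D w ≠ .red ∧
      ¬(colorOf G D u = .blue ∧ colorOf G D w = .blue)
  symm := ⟨fun u w ⟨h, a, b, c⟩ => ⟨h.symm, b, a, fun ⟨x, y⟩ => c ⟨y, x⟩⟩⟩
  loopless := ⟨fun u ⟨h, _⟩ => G.loopless.irrefl u h⟩

instance (G : SimpleGraph V) [DecidableRel G.Adj] (D : Finset V) :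
    DecidableRel (residualGraph G D).Adj := fun u w =>
  decidable_of_iff (G.Adj u w ∧ colorOf G D u ≠ .red ∧ colorOf G D w ≠ .red ∧
      ¬(colorOf G D u = .blue ∧ colorOf G D w = .blue)) Iff.rfl

def legalMoves (G : SimpleGraph V) [DecidableRel G.Adj] (D : Finset V) : Finset V :=
  Finset.univ.filter (isLegal G D)

/-- The value of the total domination game from position `D` with `fuel` moves allowed,
where `isDom = true` when it is Dominator's turn (Dominator minimizes, Staller maximizes).
Since each legal move totally dominates a new vertex, fuel `Fintype.card V` always suffices. -/
def gameVal (G : SimpleGraph V) [DecidableRel G.Adj] : Bool → ℕ → Finset V → ℕ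
  | _, 0, _ => 0
  | isDom, n + 1, D =>
    if h : (legalMoves G D).Nonempty then
      if isDom then 1 + (legalMoves G D).inf' h fun v => gameVal G false n (insert v D)
      else 1 + (legalMoves G D).sup' h fun v => gameVal G true n (insert v D)
    else 0

/-- The game total domination number `γ_tg(G)`: Dominator starts, both play optimally. -/
def gtd (G : SimpleGraph V) [DecidableRel G.Adj] : ℕ :=
  gameVal G true (Fintype.card V) ∅

/-! Playing a legal move `v`, with `u` a neighbour of `v` not yet totally dominated, raises no
vertex's weight, lowers the weight of `u` by at least 2 (white or green becomes blue or red, and a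
played `u` has no undominated neighbour left, so it turns red), and lowers the weight of `v`
by 1 (white becomes green, blue becomes red: `v` cannot dominate itself). -/

lemma Finset.sum_add_add_le_sum {ι M : Type*} [Fintype ι] [DecidableEq ι] [AddCommMonoid M]
    [PartialOrder M] [IsOrderedAddMonoid M] {f g : ι → M} (hfg : ∀ i, f i ≤ g i) {u v : ι}
    (huv : u ≠ v) {a b : M} (hu : f u + a ≤ g u) (hv : f v + b ≤ g v) :
    ∑ i, f i + (a + b) ≤ ∑ i, g i := by
  have hv' : v ∈ univ.erase u := mem_erase.mpr ⟨huv.symm, mem_univ v⟩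
  rw [← add_sum_erase _ f (mem_univ u), ← add_sum_erase _ g (mem_univ u),
    ← add_sum_erase _ f hv', ← add_sum_erase _ g hv']
  calc f u + (f v + ∑ i ∈ (univ.erase u).erase v, f i) + (a + b)
      = (f u + a) + ((f v + b) + ∑ i ∈ (univ.erase u).erase v, f i) := by abel
    _ ≤ g u + (g v + ∑ i ∈ (univ.erase u).erase v, g i) :=
      add_le_add hu (add_le_add hv (sum_le_sum fun i _ => hfg i))

section

omit [DecidableEq V]

variable (G : SimpleGraph V) [DecidableRel G.Adj]

lemma mem_totDom {D : Finset V} {u : V} : u ∈ totDom G D ↔ ∃ v ∈ D, G.Adj u v := by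
  simp [totDom]

lemma totDom_mono {D D' : Finset V} (h : D ⊆ D') : totDom G D ⊆ totDom G D' := by
  intro u hu
  obtain ⟨v, hv, huv⟩ := (mem_totDom G).mp hu
  exact (mem_totDom G).mpr ⟨v, h hv, huv⟩

lemma isLegal_anti {D D' : Finset V} (h : D ⊆ D') {w : V} (hw : isLegal G D' w) :
    isLegal G D w := by
  obtain ⟨u, hwu, hu⟩ := hw
  exact ⟨u, hwu, fun hu' => hu (totDom_mono G h hu')⟩

lemma not_isLegal_of_mem {D : Finset V} {w : V} (hw : w ∈ D) : ¬ isLegal G D w :=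
  fun ⟨_, hwu, hu⟩ => hu ((mem_totDom G).mpr ⟨w, hw, hwu.symm⟩)

variable [DecidableEq V]

lemma mem_totDom_insert_self_iff {D : Finset V} {v : V} :
    v ∈ totDom G (insert v D) ↔ v ∈ totDom G D := by
  simp only [mem_totDom, mem_insert, exists_eq_or_imp, G.irrefl, false_or]

lemma weight_colorOf_anti {D D' : Finset V} (h : D ⊆ D') (w : V) :
    (colorOf G D' w).weight ≤ (colorOf G D w).weight := by
  have hdom : w ∈ totDom G D → w ∈ totDom G D' := fun hw => totDom_mono G h hw
  have hlegal : isLegal G D' w → isLegal G D w := isLegal_anti G h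
  have hmem : w ∈ D → w ∈ D' := fun hw => h hw
  unfold colorOf
  split_ifs <;> simp_all [GameColor.weight]

lemma weight_colorOf_insert_self_add_one_le {D : Finset V} {v : V} (hv : isLegal G D v)
    (hvD : v ∉ D) :
    (colorOf G (insert v D) v).weight + 1 ≤ (colorOf G D v).weight := by
  have hnl := not_isLegal_of_mem G (mem_insert_self v D)
  by_cases hdom : v ∈ totDom G D
  · simp [colorOf, hdom, (mem_totDom_insert_self_iff G).mpr hdom, hv, hnl, GameColor.weight]
  · have hdom' : v ∉ totDom G (insert v D) := (mem_totDom_insert_self_iff G).not.mpr hdom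
    simp [colorOf, hdom, hdom', hvD, GameColor.weight]

lemma weight_colorOf_insert_add_two_le {D : Finset V} {u v : V} (huv : G.Adj u v)
    (hu : u ∉ totDom G D) :
    (colorOf G (insert v D) u).weight + 2 ≤ (colorOf G D u).weight := by
  have hu' : u ∈ totDom G (insert v D) := (mem_totDom G).mpr ⟨v, mem_insert_self v D, huv⟩
  by_cases huD : u ∈ D
  · have hnl := not_isLegal_of_mem G (mem_insert_of_mem (b := v) huD)
    simp [colorOf, hu, hu', huD, hnl, GameColor.weight]
  · simp only [colorOf, hu, hu', huD, if_true, if_false]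
    split_ifs <;> simp [GameColor.weight]

end

/-- Every legal move in a residual graph decreases the total weight by at
least 3. -/
theorem stmt3 (G : SimpleGraph V) [DecidableRel G.Adj] (D : Finset V) (v : V)
    (hv : isLegal G D v) :
    totalWeight G (insert v D) + 3 ≤ totalWeight G D := by
  have ⟨u, hvu, hu⟩ := hv
  have hvD : v ∉ D := fun h => hu ((mem_totDom G).mpr ⟨v, h, hvu.symm⟩)
  exact Finset.sum_add_add_le_sum (weight_colorOf_anti G (subset_insert v D)) hvu.ne'
    (weight_colorOf_insert_add_two_le G hvu.symm hu)
    (weight_colorOf_insert_self_add_one_le G hv hvD)
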